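/- Let (ω(i))_{i≥0} be a non-negative sequence such that for all i ≥ 0, ω(i) ≤ c·ln^δ(i+2)·min(e^{-ξ i}, 1/(i+1)), where δ ≥ 0 and c, ξ are positive constants with ξ ≤ 1. Then ∑_{i=0}^∞ sqrt(ω(i)/(i+1)) ≤ 7·sqrt(c)·ln^{δ/2+1}((δ²+4)/ξ²). -/

import Mathlib

/-!
Taking square roots, the `i`-th term is at most `√c · log^p (i+2)` times both `1/(i+1)` and
`exp (-ξ i / 2)`, where `p = δ/2`. Put `M = (δ² + 4)/ξ²` and split the series near `i = M`.
Below `M` the terms `log^p (i+2)/(i+1)` are dominated by `3/(p+1)` times the increments of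
`log^(p+1) (i+2)`, so the head telescopes to at most `3 log^(p+1) M`. Beyond `M`, the tangent
line of the concave `log` at `M` gives `log^p (i+2) ≤ log^p M · exp (ξ (i+3-M)/4)`, so the terms
decay geometrically with ratio `exp (-ξ/4)` from size `exp (-ξ M/2) ≤ exp (-2/ξ)`; this
beats the factor `8/ξ` coming from the ratio and bounds the tail by `4 log^(p+1) M`.
-/

open Real Finset

lemma sqrt_div_le_of_le_mul_min {w a e m : ℝ} (hw : 0 ≤ w) (ha : 0 ≤ a) (hm : 1 ≤ m)
    (h : w ≤ a * min e (1 / m)) : √(w / m) ≤ √a / m ∧ √(w / m) ≤ √a * √e := by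
  have hm0 : 0 < m := by linarith
  constructor
  · calc √(w / m) ≤ √(a / m ^ 2) := by
          apply sqrt_le_sqrt
          calc w / m ≤ a * (1 / m) / m := by
                gcongr; exact h.trans (by gcongr; exact min_le_right _ _)
            _ = a / m ^ 2 := by ring
      _ = √a / m := by rw [sqrt_div' _ (sq_nonneg m), sqrt_sq hm0.le]
  · calc √(w / m) ≤ √(a * e) := by
          apply sqrt_le_sqrt
          exact (div_le_self hw hm).trans (h.trans (by gcongr; exact min_le_left _ _))
      _ = √a * √e := sqrt_mul ha e

lemma add_one_mul_rpow_mul_sub_le {x y p : ℝ} (hx : 0 < x) (hxy : x ≤ y) (hp : 0 ≤ p) :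
    (p + 1) * x ^ p * (y - x) ≤ y ^ (p + 1) - x ^ (p + 1) := by
  have hs : -1 ≤ y / x - 1 := by linarith [div_nonneg (hx.le.trans hxy) hx.le]
  have bernoulli := one_add_mul_self_le_rpow_one_add hs (p := p + 1) (by linarith)
  rw [add_sub_cancel, div_rpow (hx.le.trans hxy) hx.le, le_div_iff₀ (rpow_pos_of_pos hx _),
    rpow_add_one hx.ne'] at bernoulli
  have hexpand : (1 + (p + 1) * (y / x - 1)) * (x ^ p * x)
      = x ^ p * x + (p + 1) * x ^ p * (y - x) := by
    field_simp
  rw [rpow_add_one hx.ne']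
  linarith

lemma inv_add_one_le_log_add_one_sub_log {x : ℝ} (hx : 0 < x) :
    (x + 1)⁻¹ ≤ log (x + 1) - log x := by
  have h := one_sub_inv_le_log_of_pos (div_pos (by linarith : 0 < x + 1) hx)
  rw [log_div (by linarith) hx.ne', inv_div] at h
  calc (x + 1)⁻¹ = 1 - x / (x + 1) := by field_simp; ring
    _ ≤ _ := h

lemma log_rpow_div_le {p x : ℝ} (hp : 0 ≤ p) (hx : 0 ≤ x) :
    log (x + 2) ^ p / (x + 1)
      ≤ 3 / (p + 1) * (log (x + 3) ^ (p + 1) - log (x + 2) ^ (p + 1)) := by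
  have hgap : (x + 3)⁻¹ ≤ log (x + 3) - log (x + 2) := by
    have h := inv_add_one_le_log_add_one_sub_log (x := x + 2) (by linarith)
    rwa [show x + 2 + 1 = x + 3 by ring] at h
  have hinv : 1 / (x + 1) ≤ 3 * (x + 3)⁻¹ := by
    rw [div_le_iff₀ (by linarith)]; field_simp; linarith
  calc log (x + 2) ^ p / (x + 1) = log (x + 2) ^ p * (1 / (x + 1)) := by ring
    _ ≤ log (x + 2) ^ p * (3 * (log (x + 3) - log (x + 2))) := by
        gcongr
        · exact rpow_nonneg (log_nonneg (by linarith)) p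
        · linarith
    _ = 3 / (p + 1) * ((p + 1) * log (x + 2) ^ p * (log (x + 3) - log (x + 2))) := by
        field_simp
    _ ≤ _ := by
        gcongr
        exact add_one_mul_rpow_mul_sub_le (log_pos (by linarith))
          (log_le_log (by linarith) (by linarith)) hp

lemma sum_range_log_rpow_div_le {p : ℝ} (hp : 0 ≤ p) (n : ℕ) :
    ∑ i ∈ range n, log ((i : ℝ) + 2) ^ p / ((i : ℝ) + 1)
      ≤ 3 / (p + 1) * log ((n : ℝ) + 2) ^ (p + 1) := by
  induction n with
  | zero =>
    simp only [range_zero, sum_empty, CharP.cast_eq_zero, zero_add]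
    exact mul_nonneg (by positivity) (rpow_nonneg (log_nonneg (by norm_num)) _)
  | succ n ih =>
    have hstep := log_rpow_div_le hp (Nat.cast_nonneg (α := ℝ) n)
    rw [sum_range_succ, Nat.cast_succ, show (n : ℝ) + 1 + 2 = n + 3 by ring]
    linarith

lemma log_rpow_le_log_rpow_mul_exp {y M p : ℝ} (hy : 1 ≤ y) (hM : 1 < M) (hp : 0 ≤ p) :
    log y ^ p ≤ log M ^ p * exp (p * (y - M) / (M * log M)) := by
  have hL : 0 < log M := log_pos hM
  have hM0 : 0 < M := by linarith
  have hconcave : log y ≤ log M * exp ((y - M) / (M * log M)) := calc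
    log y = log M + log (y / M) := by rw [log_div (by linarith) hM0.ne']; ring
    _ ≤ log M + (y / M - 1) := by gcongr; exact log_le_sub_one_of_pos (by positivity)
    _ = log M * ((y - M) / (M * log M) + 1) := by field_simp; ring
    _ ≤ log M * exp ((y - M) / (M * log M)) := by gcongr; exact add_one_le_exp _
  calc log y ^ p ≤ (log M * exp ((y - M) / (M * log M))) ^ p :=
        rpow_le_rpow (log_nonneg hy) hconcave hp
    _ = _ := by rw [mul_rpow hL.le (exp_pos _).le, ← exp_mul]; ring_nf

lemma four_thirds_lt_log_four : 4 / 3 < log 4 := by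
  rw [show (4 : ℝ) = 2 ^ 2 by norm_num, log_pow]
  linarith [log_two_gt_d9]

lemma log_rpow_mul_exp_le {ξ p M x y : ℝ} (hξ : 0 < ξ) (hp : 0 ≤ p) (hM : 4 ≤ M)
    (hpM : 4 * p ≤ ξ * M) (hy : 0 ≤ y) (hxy : y + M ≤ x + 3) :
    log (x + 2) ^ p * exp (-ξ * x / 2) ≤ log M ^ p * exp (ξ * (3 - M) / 2 - ξ * y / 4) := by
  have hL : 1 ≤ log M := by
    linarith [four_thirds_lt_log_four, log_le_log (by norm_num) hM]
  have hexp : p * (x + 2 - M) / (M * log M) ≤ ξ * (x + 3 - M) / 4 := by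
    have hratio : p / (M * log M) ≤ ξ / 4 := by
      rw [div_le_iff₀ (by positivity)]; nlinarith
    calc p * (x + 2 - M) / (M * log M) ≤ p * (x + 3 - M) / (M * log M) := by
          gcongr; linarith
      _ = p / (M * log M) * (x + 3 - M) := by ring
      _ ≤ ξ / 4 * (x + 3 - M) := by gcongr; linarith
      _ = _ := by ring
  calc log (x + 2) ^ p * exp (-ξ * x / 2)
      ≤ log M ^ p * exp (p * (x + 2 - M) / (M * log M)) * exp (-ξ * x / 2) := by
        gcongr; exact log_rpow_le_log_rpow_mul_exp (by linarith) (by linarith) hp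
    _ ≤ log M ^ p * exp (ξ * (x + 3 - M) / 4) * exp (-ξ * x / 2) := by
        gcongr log M ^ p * ?_ * _; exact exp_le_exp.2 hexp
    _ = log M ^ p * exp (ξ * (3 - M) / 4 - ξ * x / 4) := by
        rw [mul_assoc, ← exp_add]; ring_nf
    _ ≤ _ := by
        gcongr log M ^ p * ?_; exact exp_le_exp.2 (by nlinarith)

lemma summable_and_tsum_le_of_le_geometric {f : ℕ → ℝ} {C r : ℝ} (hf : ∀ j, 0 ≤ f j)
    (hfr : ∀ j, f j ≤ C * r ^ j) (hr0 : 0 ≤ r) (hr1 : r < 1) :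
    Summable f ∧ ∑' j, f j ≤ C / (1 - r) := by
  have hgeom := (hasSum_geometric_of_lt_one hr0 hr1).mul_left C
  have hsum := Summable.of_nonneg_of_le hf hfr hgeom.summable
  exact ⟨hsum, hasSum_le hfr hsum.hasSum hgeom⟩

lemma half_le_one_sub_exp_neg {x : ℝ} (hx0 : 0 ≤ x) (hx1 : x ≤ 1) :
    x / 2 ≤ 1 - exp (-x) := by
  have h : exp (-x) * (1 + x) ≤ 1 := by
    rw [exp_neg]
    calc (exp x)⁻¹ * (1 + x) ≤ (exp x)⁻¹ * exp x := by gcongr; linarith [add_one_le_exp x]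
      _ = 1 := inv_mul_cancel₀ (exp_pos x).ne'
  nlinarith [exp_pos (-x), mul_nonneg hx0 (sub_nonneg.2 hx1)]

lemma eight_div_mul_exp_le {ξ : ℝ} (hξ : 0 < ξ) (hξ1 : ξ ≤ 1) :
    8 / ξ * exp (3 / 2 - 2 / ξ) ≤ 4 * log 4 := by
  set x := 1 / ξ
  have hx : 1 ≤ x := by rw [le_div_iff₀ hξ]; linarith
  have hxexp : x ≤ exp (2 * x - 2) := by linarith [add_one_le_exp (2 * x - 2)]
  have hhalf : 3 / 2 ≤ exp (1 / 2) := by linarith [add_one_le_exp (1 / 2)]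
  calc 8 / ξ * exp (3 / 2 - 2 / ξ) = 8 * x * exp (3 / 2 - 2 * x) := by
        simp only [x]; ring_nf
    _ ≤ 8 * exp (2 * x - 2) * exp (3 / 2 - 2 * x) := by gcongr
    _ = 8 / exp (1 / 2) := by
        rw [mul_assoc, ← exp_add, eq_div_iff (exp_pos _).ne', mul_assoc, ← exp_add]; norm_num
    _ ≤ 8 / (3 / 2) := by gcongr
    _ ≤ 4 * log 4 := by linarith [four_thirds_lt_log_four]

lemma sum_range_le_of_le_log_rpow_div {t : ℕ → ℝ} {K p M : ℝ} {n : ℕ} (hK : 0 ≤ K)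
    (hp : 0 ≤ p) (hnM : (n : ℝ) + 2 ≤ M)
    (ht : ∀ i : ℕ, t i ≤ K * log ((i : ℝ) + 2) ^ p / ((i : ℝ) + 1)) :
    ∑ i ∈ range n, t i ≤ 3 * K * log M ^ (p + 1) := calc
  ∑ i ∈ range n, t i ≤ K * ∑ i ∈ range n, log ((i : ℝ) + 2) ^ p / ((i : ℝ) + 1) := by
      rw [mul_sum]
      exact sum_le_sum fun i _ => (ht i).trans_eq (mul_div_assoc _ _ _)
  _ ≤ K * (3 / (p + 1) * log ((n : ℝ) + 2) ^ (p + 1)) := by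
      gcongr; exact sum_range_log_rpow_div_le hp n
  _ ≤ K * (3 * log M ^ (p + 1)) := by
      have hlog : 0 ≤ log ((n : ℝ) + 2) :=
        log_nonneg (by linarith [Nat.cast_nonneg (α := ℝ) n])
      gcongr
      exact div_le_self (by norm_num) (by linarith)
  _ = 3 * K * log M ^ (p + 1) := by ring

lemma summable_nat_add_and_tsum_le {t : ℕ → ℝ} {K ξ p M : ℝ} {n : ℕ} (hK : 0 ≤ K)
    (hξ : 0 < ξ) (hξ1 : ξ ≤ 1) (hp : 0 ≤ p) (hM : 4 ≤ ξ ^ 2 * M) (hpM : 4 * p ≤ ξ * M)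
    (hnM : M ≤ (n : ℝ) + 3) (ht0 : ∀ i, 0 ≤ t i)
    (ht : ∀ i : ℕ, t i ≤ K * log ((i : ℝ) + 2) ^ p * exp (-ξ * i / 2)) :
    Summable (fun j => t (j + n)) ∧ ∑' j, t (j + n) ≤ 4 * K * log M ^ (p + 1) := by
  have hM4 : 4 ≤ M := by nlinarith
  have hL : log 4 ≤ log M := log_le_log (by norm_num) hM4
  have hLpos : 0 < log M := by linarith [four_thirds_lt_log_four]
  set C := K * log M ^ p * exp (ξ * (3 - M) / 2)
  have hdecay : ∀ j : ℕ, t (j + n) ≤ C * exp (-(ξ / 4)) ^ j := fun j => calc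
    t (j + n)
        ≤ K * (log (((j + n : ℕ) : ℝ) + 2) ^ p * exp (-ξ * ((j + n : ℕ) : ℝ) / 2)) := by
        rw [← mul_assoc]; exact ht _
    _ ≤ K * (log M ^ p * exp (ξ * (3 - M) / 2 - ξ * j / 4)) := by
        gcongr K * ?_
        exact log_rpow_mul_exp_le (x := ((j + n : ℕ) : ℝ)) hξ hp hM4 (by nlinarith)
          (Nat.cast_nonneg j) (by push_cast; linarith)
    _ = C * exp (-(ξ / 4)) ^ j := by
        simp only [C]; rw [← exp_nat_mul, sub_eq_add_neg, exp_add]; ring_nf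
  obtain ⟨hsum, hle⟩ := summable_and_tsum_le_of_le_geometric (fun j => ht0 _) hdecay
    (exp_pos _).le (exp_lt_one_iff.2 (by linarith))
  refine ⟨hsum, hle.trans ?_⟩
  have hgap := half_le_one_sub_exp_neg (x := ξ / 4) (by positivity) (by linarith)
  have hstart : exp (ξ * (3 - M) / 2) ≤ exp (3 / 2 - 2 / ξ) := by
    apply exp_le_exp.2
    have : 2 / ξ ≤ ξ * M / 2 := by rw [div_le_iff₀ hξ]; nlinarith
    nlinarith
  calc C / (1 - exp (-(ξ / 4))) ≤ C / (ξ / 4 / 2) := by gcongr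
    _ = K * log M ^ p * (8 / ξ * exp (ξ * (3 - M) / 2)) := by
        simp only [C]; field_simp; ring
    _ ≤ K * log M ^ p * (8 / ξ * exp (3 / 2 - 2 / ξ)) := by gcongr
    _ ≤ K * log M ^ p * (4 * log M) := by
        gcongr K * log M ^ p * ?_; linarith [eight_div_mul_exp_le hξ hξ1]
    _ = 4 * K * log M ^ (p + 1) := by rw [rpow_add_one hLpos.ne']; ring

theorem summable_and_tsum_le_of_le_log_rpow {t : ℕ → ℝ} {K ξ p M : ℝ} (hK : 0 ≤ K)
    (hξ : 0 < ξ) (hξ1 : ξ ≤ 1) (hp : 0 ≤ p) (hM : 4 ≤ ξ ^ 2 * M) (hpM : 4 * p ≤ ξ * M)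
    (ht0 : ∀ i, 0 ≤ t i)
    (htA : ∀ i : ℕ, t i ≤ K * log ((i : ℝ) + 2) ^ p / ((i : ℝ) + 1))
    (htB : ∀ i : ℕ, t i ≤ K * log ((i : ℝ) + 2) ^ p * exp (-ξ * i / 2)) :
    Summable t ∧ ∑' i, t i ≤ 7 * K * log M ^ (p + 1) := by
  have hM0 : 0 ≤ M := by nlinarith
  have hfloor : 2 ≤ ⌊M⌋₊ := Nat.le_floor (by push_cast; nlinarith)
  have hn : ((⌊M⌋₊ - 2 : ℕ) : ℝ) + 2 = ⌊M⌋₊ := by rw [Nat.cast_sub hfloor]; ring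
  obtain ⟨hsum, htail⟩ :=
    summable_nat_add_and_tsum_le (n := ⌊M⌋₊ - 2) hK hξ hξ1 hp hM hpM
      (by linarith [Nat.lt_floor_add_one M]) ht0 htB
  have hhead := sum_range_le_of_le_log_rpow_div (n := ⌊M⌋₊ - 2) hK hp
    (hn.trans_le (Nat.floor_le hM0)) htA
  have hsum' : Summable t := (summable_nat_add_iff _).1 hsum
  refine ⟨hsum', ?_⟩
  rw [← hsum'.sum_add_tsum_nat_add (⌊M⌋₊ - 2)]
  linarith

theorem stmt5 (ω : ℕ → ℝ) (c ξ δ : ℝ) (hc : 0 < c) (hξ : 0 < ξ) (hξ1 : ξ ≤ 1) (hδ : 0 ≤ δ)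
    (hnn : ∀ i, 0 ≤ ω i)
    (hb : ∀ i : ℕ, ω i ≤ c * Real.log ((i : ℝ) + 2) ^ δ *
        min (Real.exp (-ξ * i)) (1 / ((i : ℝ) + 1))) :
    Summable (fun i : ℕ => Real.sqrt (ω i / ((i : ℝ) + 1))) ∧
      ∑' i : ℕ, Real.sqrt (ω i / ((i : ℝ) + 1))
        ≤ 7 * Real.sqrt c * Real.log ((δ ^ 2 + 4) / ξ ^ 2) ^ (δ / 2 + 1) := by
  have hlog : ∀ i : ℕ, 0 ≤ log ((i : ℝ) + 2) := fun i =>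
    log_nonneg (by linarith [Nat.cast_nonneg (α := ℝ) i])
  have hsqrt (i : ℕ) :
      √(c * log ((i : ℝ) + 2) ^ δ) = √c * log ((i : ℝ) + 2) ^ (δ / 2) := by
    rw [sqrt_mul hc.le, sqrt_eq_rpow (log _ ^ δ), ← rpow_mul (hlog i)]
    ring_nf
  have hbounds := fun i : ℕ => sqrt_div_le_of_le_mul_min (hnn i)
    (mul_nonneg hc.le (rpow_nonneg (hlog i) δ)) (by linarith [Nat.cast_nonneg (α := ℝ) i])
    (hb i)
  refine summable_and_tsum_le_of_le_log_rpow (sqrt_nonneg c) hξ hξ1 (by positivity) ?_ ?_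
    (fun i => sqrt_nonneg _) (fun i => (hbounds i).1.trans_eq (by rw [hsqrt]))
    (fun i => (hbounds i).2.trans_eq (by rw [hsqrt, ← exp_half]))
  · rw [mul_div_cancel₀ _ (by positivity)]; nlinarith
  · rw [show ξ * ((δ ^ 2 + 4) / ξ ^ 2) = (δ ^ 2 + 4) / ξ by field_simp, le_div_iff₀ hξ]
    nlinarith [sq_nonneg (δ - 1)]
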